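/- arXiv:2305.06571 — 7 statements merged into one kernel-verified Lean document; each statement's English description precedes it below -/
import Mathlib

section
/- Let λ ∈ ℂ with λ ≠ 0, let μ > 0, and let h be a step size with 0 < h < 1/(2|λ|). Suppose (y_n)_{n≥0} is a sequence of non-negative real numbers satisfying, for every n ≥ 1, |1 − λh| · y_n = y_{n−1} + h²μ · Σ_{i=0}^{n−1} y_i. Then for every k ∈ ℕ, y_k ≤ exp(2|λ|kh + μk²h²) · y_0. -/
/-!
Since `|1 - λh| ≥ 1 - |λ|h` and `|λ|h < 1/2`, the recurrence gives
`(1 - a) y_{n+1} ≤ y_n + h²μ Σ_{i ≤ n} y_i` with `a = |λ|h`. Bounding every earlier term by the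
inductive bound for `y_n`, the right-hand side is at most `(1 + (n+1)h²μ) e^{2an + μn²h²} y_0`,
and `1 + x ≤ eˣ` together with `1 ≤ (1 - a) e^{2a}` for `0 ≤ a ≤ 1/2` absorbs both factors into
the exponent, because `n² + (n + 1) ≤ (n + 1)²`.
-/

open Finset Real

lemma one_le_one_sub_mul_exp_two_mul {a : ℝ} (ha₀ : 0 ≤ a) (ha : a ≤ 1 / 2) :
    1 ≤ (1 - a) * exp (2 * a) := by
  nlinarith [add_one_le_exp (2 * a)]

theorem le_exp_mul_of_memory_recurrence {a b : ℝ} {y : ℕ → ℝ} (ha₀ : 0 ≤ a) (ha : a ≤ 1 / 2)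
    (hb : 0 ≤ b) (hy : ∀ n, 0 ≤ y n)
    (hrec : ∀ n, (1 - a) * y (n + 1) ≤ y n + b * ∑ i ∈ range (n + 1), y i) (k : ℕ) :
    y k ≤ exp (2 * a * k + b * k ^ 2) * y 0 := by
  induction k using Nat.strong_induction_on with
  | _ k ih =>
  cases k with
  | zero => simp
  | succ n =>
    set E : ℕ → ℝ := fun m => exp (2 * a * m + b * m ^ 2) with hE
    have hmono : Monotone E := fun i j hij => by
      have : (i : ℝ) ≤ j := by exact_mod_cast hij
      simp only [hE]
      gcongr
    have hprev : ∀ i ≤ n, y i ≤ E n * y 0 := fun i hi =>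
      (ih i (by omega)).trans (mul_le_mul_of_nonneg_right (hmono hi) (hy 0))
    have hsum : ∑ i ∈ range (n + 1), y i ≤ (n + 1) * (E n * y 0) := by
      simpa using sum_le_card_nsmul (range (n + 1)) y (E n * y 0)
        fun i hi => hprev i (by simpa [Nat.lt_succ_iff] using hi)
    have hEy : 0 ≤ E n * y 0 := mul_nonneg (exp_pos _).le (hy 0)
    have key : (1 - a) * y (n + 1) ≤ (1 - a) * (E (n + 1) * y 0) := calc
      (1 - a) * y (n + 1) ≤ y n + b * ∑ i ∈ range (n + 1), y i := hrec n
      _ ≤ E n * y 0 + b * ((n + 1) * (E n * y 0)) := by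
        gcongr
        exact hprev n le_rfl
      _ = (b * (n + 1) + 1) * (E n * y 0) := by ring
      _ ≤ exp (b * (n + 1)) * (E n * y 0) := by gcongr; exact add_one_le_exp _
      _ ≤ (1 - a) * exp (2 * a) * (exp (b * (n + 1)) * (E n * y 0)) :=
        le_mul_of_one_le_left (by positivity) (one_le_one_sub_mul_exp_two_mul ha₀ ha)
      _ = (1 - a) * (exp (2 * a * n + b * n ^ 2 + (2 * a + b * (n + 1))) * y 0) := by
        simp only [hE, exp_add]; ring
      _ ≤ (1 - a) * (E (n + 1) * y 0) := by
        have h1a : 0 ≤ 1 - a := by linarith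
        have hy0 := hy 0
        simp only [hE]
        gcongr (1 - a) * (exp ?_ * y 0)
        push_cast
        nlinarith [mul_nonneg hb (Nat.cast_nonneg (α := ℝ) n)]
    exact le_of_mul_le_mul_left key (by linarith)

theorem stmt_0_general (lam : ℂ) (μ : ℝ) (hμ : 0 < μ)
    (h : ℝ) (hh : 0 < h) (hh' : h < 1 / (2 * ‖lam‖))
    (y : ℕ → ℝ) (hy : ∀ n, 0 ≤ y n)
    (hrec : ∀ n : ℕ, 1 ≤ n →
      ‖1 - lam * (h : ℂ)‖ * y n
        = y (n - 1) + h ^ 2 * μ * ∑ i ∈ Finset.range n, y i) :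
    ∀ k : ℕ, y k ≤ Real.exp (2 * ‖lam‖ * k * h + μ * k ^ 2 * h ^ 2) * y 0 := by
  have ha : ‖lam‖ * h ≤ 1 / 2 := by
    rcases (norm_nonneg lam).eq_or_lt with hlam | hlam
    · rw [← hlam]; norm_num
    · have := (lt_div_iff₀ (by positivity)).mp hh'
      linarith
  have hnorm : 1 - ‖lam‖ * h ≤ ‖1 - lam * (h : ℂ)‖ := by
    simpa [norm_mul, abs_of_pos hh] using norm_sub_norm_le (1 : ℂ) (lam * h)
  have hrec' (n : ℕ) :
      (1 - ‖lam‖ * h) * y (n + 1) ≤ y n + μ * h ^ 2 * ∑ i ∈ range (n + 1), y i := calc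
    _ ≤ ‖1 - lam * (h : ℂ)‖ * y (n + 1) := mul_le_mul_of_nonneg_right hnorm (hy _)
    _ = _ := by rw [hrec (n + 1) (by omega), Nat.add_sub_cancel]; ring
  intro k
  convert le_exp_mul_of_memory_recurrence (by positivity) ha (by positivity) hy hrec' k using 3
  ring

/-- Induction lemma for zero-stability (Lemma 3.1). -/
theorem stmt_0 (lam : ℂ) (hlam : lam ≠ 0) (μ : ℝ) (hμ : 0 < μ)
    (h : ℝ) (hh : 0 < h) (hh' : h < 1 / (2 * ‖lam‖))
    (y : ℕ → ℝ) (hy : ∀ n, 0 ≤ y n)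
    (hrec : ∀ n : ℕ, 1 ≤ n →
      ‖1 - lam * (h : ℂ)‖ * y n
        = y (n - 1) + h ^ 2 * μ * ∑ i ∈ Finset.range n, y i) :
    ∀ k : ℕ, y k ≤ Real.exp (2 * ‖lam‖ * k * h + μ * k ^ 2 * h ^ 2) * y 0 :=
  stmt_0_general lam μ hμ h hh hh' y hy hrec
end

section
/- Let λ ∈ ℂ, μ > 0, h > 0 and n ≥ 1 be a natural number. If |λ|h ≤ 1/2, then (1 + μnh²)/|1 − λh| ≤ exp(2|λ|h + μ(2n−1)h²). -/
/-! The reverse triangle inequality gives `‖1 - λh‖ ≥ 1 - x` with `x = |λ|h ≤ 1/2`,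
and on `[0, 1/2]` one has `(1 + 2x)(1 - x) = 1 + x(1 - 2x) ≥ 1`, so `(1 - x)⁻¹ ≤ 1 + 2x ≤ exp (2x)`.
Together with `1 + μnh² ≤ exp (μnh²)` and `n ≤ 2n - 1` this gives the bound. -/

open Real

lemma inv_one_sub_le_exp_two_mul {x : ℝ} (hx0 : 0 ≤ x) (hx : x ≤ 1 / 2) :
    (1 - x)⁻¹ ≤ exp (2 * x) := by
  have hpos : 0 < 1 - x := by linarith
  calc (1 - x)⁻¹ ≤ 1 + 2 * x := by
        rw [inv_le_iff_one_le_mul₀ hpos]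
        nlinarith
    _ ≤ exp (2 * x) := by linarith [add_one_le_exp (2 * x)]

/-- Key inequality in the proof of the induction lemma for zero-stability. -/
theorem stmt_1 (lam : ℂ) (μ : ℝ) (hμ : 0 < μ) (h : ℝ) (hh : 0 < h)
    (n : ℕ) (hn : 1 ≤ n) (hsmall : ‖lam‖ * h ≤ 1 / 2) :
    (1 + μ * n * h ^ 2) / ‖1 - lam * (h : ℂ)‖
      ≤ Real.exp (2 * ‖lam‖ * h + μ * (2 * n - 1) * h ^ 2) := by
  set x := ‖lam‖ * h with hx
  have hx0 : 0 ≤ x := by positivity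
  have hden : 1 - x ≤ ‖1 - lam * (h : ℂ)‖ := by
    simpa [norm_mul, abs_of_pos hh, hx] using norm_sub_norm_le (1 : ℂ) (lam * h)
  have hgrowth : 0 ≤ μ * n * h ^ 2 := by positivity
  have hn' : (1 : ℝ) ≤ n := by exact_mod_cast hn
  calc (1 + μ * n * h ^ 2) / ‖1 - lam * (h : ℂ)‖
      ≤ (1 + μ * n * h ^ 2) * (1 - x)⁻¹ := by
        rw [← div_eq_mul_inv]
        exact div_le_div_of_nonneg_left (by positivity) (by linarith) hden
    _ ≤ exp (μ * n * h ^ 2) * exp (2 * x) :=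
        mul_le_mul (by linarith [add_one_le_exp (μ * n * h ^ 2)])
          (inv_one_sub_le_exp_two_mul hx0 hsmall) (inv_nonneg.2 (by linarith))
          (exp_pos _).le
    _ ≤ exp (2 * ‖lam‖ * h + μ * (2 * n - 1) * h ^ 2) := by
        rw [← exp_add, exp_le_exp]
        nlinarith [mul_le_mul_of_nonneg_left hn' (by positivity : 0 ≤ μ * h ^ 2)]
end

section
/- Let a ≥ 0, b ≥ 0 and h > 0, and let (y_n)_{n≥0} be a sequence of non-negative real numbers satisfying, for every n ≥ 1, y_n ≤ (1 + ah) · y_{n−1} + bh² · Σ_{i=0}^{n−1} y_i. Then for every k ∈ ℕ, y_k ≤ exp(akh + bk²h²) · y_0. -/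
/-- Discrete Grönwall-type inequality used for zero-stability. -/
theorem stmt_2 (a b h : ℝ) (ha : 0 ≤ a) (hb : 0 ≤ b) (hh : 0 < h)
    (y : ℕ → ℝ) (hy : ∀ n, 0 ≤ y n)
    (hrec : ∀ n : ℕ, 1 ≤ n →
      y n ≤ (1 + a * h) * y (n - 1) + b * h ^ 2 * ∑ i ∈ Finset.range n, y i) :
    ∀ k : ℕ, y k ≤ Real.exp (a * k * h + b * k ^ 2 * h ^ 2) * y 0 := by
  intro k
  set M : ℝ := 1 + (a * h + b * k * h ^ 2) with hMdef
  have hkn : (0:ℝ) ≤ (k:ℝ) := Nat.cast_nonneg k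
  have hx0 : 0 ≤ a * h + b * k * h ^ 2 := by positivity
  have hM1 : 1 ≤ M := by simp [hMdef]; linarith
  have hM0 : 0 ≤ M := by linarith
  have key : ∀ n, n ≤ k → ∀ i ≤ n, y i ≤ M ^ i * y 0 := by
    intro n
    induction n with
    | zero =>
      intro _ i hi
      interval_cases i
      simp
    | succ n ih =>
      intro hnk i hi
      rcases Nat.lt_succ_iff_lt_or_eq.mp (Nat.lt_succ_of_le hi) with h1 | rfl
      · exact ih (Nat.le_of_succ_le hnk) i (Nat.lt_succ_iff.mp h1)
      · have hsum : ∑ j ∈ Finset.range (n + 1), y j ≤ (n + 1 : ℝ) * (M ^ n * y 0) := by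
          calc ∑ j ∈ Finset.range (n + 1), y j
              ≤ ∑ j ∈ Finset.range (n + 1), M ^ n * y 0 := by
                apply Finset.sum_le_sum
                intro j hj
                have hjn : j ≤ n := Nat.lt_succ_iff.mp (Finset.mem_range.mp hj)
                calc y j ≤ M ^ j * y 0 :=
                        ih (Nat.le_of_succ_le hnk) j hjn
                  _ ≤ M ^ n * y 0 :=
                        mul_le_mul_of_nonneg_right (pow_le_pow_right₀ hM1 hjn) (hy 0)
            _ = (n + 1 : ℝ) * (M ^ n * y 0) := by
                simp [Finset.sum_const, mul_comm]
        have hk' : ((n:ℝ) + 1) ≤ (k:ℝ) := by exact_mod_cast hnk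
        have hyn : y n ≤ M ^ n * y 0 := ih (Nat.le_of_succ_le hnk) n le_rfl
        have hrec' := hrec (n + 1) (Nat.le_add_left 1 n)
        simp only [Nat.add_sub_cancel] at hrec'
        have hMy : 0 ≤ M ^ n * y 0 := mul_nonneg (pow_nonneg hM0 n) (hy 0)
        calc y (n + 1)
            ≤ (1 + a * h) * y n + b * h ^ 2 * ∑ j ∈ Finset.range (n + 1), y j := hrec'
          _ ≤ (1 + a * h) * (M ^ n * y 0) + b * h ^ 2 * ((n + 1 : ℝ) * (M ^ n * y 0)) := by
              have h1ah : 0 ≤ 1 + a * h := by positivity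
              have hbh : 0 ≤ b * h ^ 2 := by positivity
              gcongr
          _ ≤ (1 + a * h) * (M ^ n * y 0) + b * h ^ 2 * ((k : ℝ) * (M ^ n * y 0)) := by
              have hbh : 0 ≤ b * h ^ 2 := by positivity
              gcongr
          _ = M ^ (n + 1) * y 0 := by rw [hMdef]; ring
  have hMk : y k ≤ M ^ k * y 0 := key k le_rfl k le_rfl
  have hexp : M ^ k ≤ Real.exp (a * k * h + b * k ^ 2 * h ^ 2) := by
    have h1 : M ≤ Real.exp (a * h + b * k * h ^ 2) := by
      have := Real.add_one_le_exp (a * h + b * k * h ^ 2)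
      linarith
    calc M ^ k ≤ (Real.exp (a * h + b * k * h ^ 2)) ^ k := pow_le_pow_left₀ hM0 h1 k
      _ = Real.exp ((k : ℝ) * (a * h + b * k * h ^ 2)) := (Real.exp_nat_mul _ k).symm
      _ = Real.exp (a * k * h + b * k ^ 2 * h ^ 2) := by ring_nf
  calc y k ≤ M ^ k * y 0 := hMk
    _ ≤ Real.exp (a * k * h + b * k ^ 2 * h ^ 2) * y 0 :=
        mul_le_mul_of_nonneg_right hexp (hy 0)
end

section
/- Fix d ≥ 1, q ≥ 1, real coefficients α_0, …, α_{q−1} and β_0, …, β_q, and constants L, M, C₀ > 0 and an integer p ≥ 1. Assume the generating polynomial p(s) = s^q − Σ_{i=1}^{q} α_{q−i} s^{q−i} satisfies the root condition: every complex root of p has modulus at most 1 and every root of modulus exactly 1 is simple. Let f : ℝ^d × ℝ → ℝ^d and g : ℝ^d × ℝ × ℝ → ℝ^d be uniformly L-Lipschitz in their first argument with respect to ‖·‖_∞, let the quadrature weights satisfy |w_{n,i}| ≤ Mh, and let x : [0,∞) → ℝ^d be a function whose local truncation errors τ_n := x(t_n) − Σ_{i=1}^{q} α_{q−i} x(t_{n−i})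 − h Σ_{i=0}^{q} β_{q−i} f(x(t_{n−i}), t_{n−i}) − h Σ_{i=0}^{n} w_{n,i} g(x(t_i), t_i, t_n) satisfy ‖τ_n‖_∞ ≤ C₀ h^{p+1} for all n ≥ q. Then for every T > 0 there exist h₀ > 0 and C = C(T) > 0 such that for all 0 < h ≤ h₀, the numerical solution (x_n) defined by the scheme x_n = Σ_{i=1}^{q} α_{q−i} x_{n−i} + h Σ_{i=0}^{q} β_{q−i} f(x_{n−i}, t_{n−i}) + h Σ_{i=0}^{n} w_{n,i} g(x_i, t_i, t_n) for n ≥ q with exact starting values x_i = x(t_i) for 0 ≤ i ≤ q−1, satisfies ‖x(t_n) − x_n‖_∞ ≤ C h^{p} for every n with nh ≤ T. -/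
/-!
Let `eₙ = x(tₙ) - xₙ`. Subtracting the scheme from the consistency estimate bounds the residual
`δₙ = eₙ - ∑ α_{q-i} e_{n-i}` by `C₀ h^{p+1}` plus Lipschitz terms `h · ∑ ‖eᵢ‖`. The linear
recurrence is inverted by the coefficients `γₙ` of `1 / ρ̃`, where `ρ̃(X) = X^q ρ(1/X)`:
`eₙ = ∑ γ_{n-k} δ_k`. Over `ℂ`, `1 / ρ̃ = ∏ 1 / (1 - λX)` over the roots `λ` of `ρ`. By partial
fractions, the product over the simple roots on the unit circle is a linear combination of
geometric series with bounded coefficients, and each remaining factor has `|λ| < 1`, so it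
preserves bounded coefficients. Hence the root condition makes `(γₙ)` bounded, which gives
`‖eₙ‖ ≤ A hᵖ + h C ∑_{i ≤ n} ‖eᵢ‖` for `nh ≤ T`, and a discrete Grönwall inequality finishes.
-/

namespace LinearMultistep

open Finset Polynomial
open scoped ENNReal

theorem sum_antidiagonal_smul_sum_antidiagonal {S E : Type*} [Semiring S] [AddCommMonoid E]
    [Module S E] (a b : ℕ → S) (e : ℕ → E) (n : ℕ) :
    ∑ p ∈ antidiagonal n, a p.1 • ∑ r ∈ antidiagonal p.2, b r.1 • e r.2 =
      ∑ p ∈ antidiagonal n, (∑ r ∈ antidiagonal p.1, a r.1 * b r.2) • e p.2 := by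
  simp only [smul_sum, sum_smul, smul_smul, sum_sigma']
  apply sum_nbij' (fun ⟨⟨i, _⟩, ⟨k, l⟩⟩ ↦ ⟨(i + k, l), (i, k)⟩)
    (fun ⟨⟨_, l⟩, ⟨i, k⟩⟩ ↦ ⟨(i, k + l), (k, l)⟩) <;> aesop (add simp [add_assoc])

theorem sum_antidiagonal_snd {M : Type*} [AddCommMonoid M] (f : ℕ → M) (n : ℕ) :
    ∑ p ∈ antidiagonal n, f p.2 = ∑ j ∈ range (n + 1), f j := by
  rw [← Nat.sum_antidiagonal_swap]
  exact Nat.sum_antidiagonal_eq_sum_range_succ_mk (f ∘ Prod.fst) n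

theorem sum_antidiagonal_ite_fst {M : Type*} [AddCommMonoid M] (v : ℕ → M) {i n : ℕ}
    (hi : i ≤ n) : ∑ p ∈ antidiagonal n, (if p.1 = i then v p.2 else 0) = v (n - i) := by
  rw [Nat.sum_antidiagonal_eq_sum_range_succ_mk, sum_ite_eq', if_pos (mem_range_succ_iff.2 hi)]

theorem sum_Icc_comp_sub_le {u : ℕ → ℝ} (hu : ∀ j, 0 ≤ u j) {i q : ℕ} (hi : i ≤ q) (n : ℕ) :
    ∑ k ∈ Icc q n, u (k - i) ≤ ∑ j ∈ range (n + 1), u j := by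
  rw [← sum_image (g := (· - i)) fun a ha b hb hab => by
    simp only [coe_Icc, Set.mem_Icc] at ha hb hab; omega]
  refine sum_le_sum_of_subset_of_nonneg (fun j hj => ?_) fun j _ _ => hu j
  simp only [mem_image, mem_Icc] at hj
  simp only [mem_range]
  omega

theorem sum_Icc_sum_mul_comp_sub_le {u : ℕ → ℝ} (hu : ∀ j, 0 ≤ u j) {b : ℕ → ℝ}
    (hb : ∀ i, 0 ≤ b i) (q n : ℕ) :
    ∑ k ∈ Icc q n, ∑ i ∈ range (q + 1), b i * u (k - i) ≤
      (∑ i ∈ range (q + 1), b i) * ∑ j ∈ range (n + 1), u j := by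
  rw [sum_comm, sum_mul]
  refine sum_le_sum fun i hi => ?_
  rw [← mul_sum]
  exact mul_le_mul_of_nonneg_left (sum_Icc_comp_sub_le hu (mem_range_succ_iff.1 hi) n) (hb i)

theorem le_two_mul_exp_of_le_add_mul_sum {u : ℕ → ℝ} {a b : ℝ} (hu : ∀ n, 0 ≤ u n)
    (hb : 0 ≤ b) (hb2 : b ≤ 1 / 2) {N : ℕ}
    (hle : ∀ n ≤ N, u n ≤ a + b * ∑ i ∈ range (n + 1), u i) :
    u N ≤ 2 * a * Real.exp (2 * b * N) := by
  have hexplicit : ∀ n ≤ N, u n ≤ 2 * a + 2 * b * ∑ i ∈ range n, u i := by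
    intro n hn
    have h := hle n hn
    rw [sum_range_succ] at h
    nlinarith [mul_nonneg (by linarith : 0 ≤ 1 - 2 * b) (hu n)]
  have hpow : ∀ n ≤ N, 2 * a + 2 * b * ∑ i ∈ range n, u i ≤ 2 * a * (1 + 2 * b) ^ n := by
    intro n
    induction n with
    | zero => simp
    | succ n ih =>
      intro hn
      have h1 := mul_le_mul_of_nonneg_left (ih (by omega)) (by linarith : 0 ≤ 1 + 2 * b)
      have h2 := mul_le_mul_of_nonneg_left (hexplicit n (by omega)) (by linarith : 0 ≤ 2 * b)
      rw [sum_range_succ, pow_succ]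
      nlinarith
  have ha : 0 ≤ a := by
    have h := hle 0 (Nat.zero_le N)
    simp only [zero_add, range_one, sum_singleton] at h
    nlinarith [hu 0]
  calc u N ≤ 2 * a * (1 + 2 * b) ^ N := (hexplicit N le_rfl).trans (hpow N le_rfl)
    _ ≤ 2 * a * Real.exp (2 * b * N) := by
      rw [mul_comm (2 * b), Real.exp_nat_mul]
      gcongr
      linarith [Real.add_one_le_exp (2 * b)]

theorem reverse_X_sub_C {K : Type*} [Field K] (l : K) : (X - C l).reverse = 1 - C l * X := by
  rw [sub_eq_add_neg, ← C_neg, reverse_add_C, ← one_mul X, reverse_mul_X, ← C_1, reverse_C]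
  simp [sub_eq_add_neg]

theorem reverse_prod_X_sub_C {K : Type*} [Field K] (s : Multiset K) :
    (s.map fun l => X - C l).prod.reverse = (s.map fun l => 1 - C l * X).prod := by
  induction s using Multiset.induction_on with
  | empty => simpa using reverse_C (1 : K)
  | cons l s ih => simp [reverse_mul_of_domain, ih, reverse_X_sub_C]

theorem reverse_eq_prod_roots {K : Type*} [Field K] {p : K[X]} (hs : p.Splits) (hm : p.Monic) :
    p.reverse = (p.roots.map fun l => 1 - C l * X).prod := by
  conv_lhs => rw [hs.eq_prod_roots_of_monic hm]
  exact reverse_prod_X_sub_C _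

section Rho

variable {R : Type*} [CommRing R]

noncomputable def rho (a : ℕ → R) (q : ℕ) : R[X] :=
  X ^ q - ∑ j ∈ range q, C (a j) * X ^ j

theorem degree_sum_C_mul_X_pow_lt [Nontrivial R] (a : ℕ → R) (q : ℕ) :
    (∑ j ∈ range q, C (a j) * X ^ j).degree < (q : WithBot ℕ) := by
  rw [degree_lt_iff_coeff_zero]
  intro m hm
  simp only [finsetSum_coeff, coeff_C_mul, coeff_X_pow, mul_ite, mul_one, mul_zero, sum_ite_eq,
    mem_range, ite_eq_right_iff]
  omega

theorem monic_rho [Nontrivial R] (a : ℕ → R) (q : ℕ) : (rho a q).Monic :=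
  monic_X_pow_sub (degree_sum_C_mul_X_pow_lt a q)

theorem natDegree_rho [Nontrivial R] (a : ℕ → R) (q : ℕ) : (rho a q).natDegree = q := by
  refine natDegree_eq_of_degree_eq_some ?_
  rw [rho, degree_sub_eq_left_of_degree_lt] <;> rw [degree_X_pow]
  exact degree_sum_C_mul_X_pow_lt a q

theorem coeff_rho (a : ℕ → R) (q j : ℕ) :
    (rho a q).coeff j = (if j = q then 1 else 0) - if j < q then a j else 0 := by
  simp [rho, coeff_X_pow]

theorem reverse_rho [Nontrivial R] (a : ℕ → R) (q : ℕ) :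
    (rho a q).reverse = 1 - ∑ i ∈ Icc 1 q, C (a (q - i)) * X ^ i := by
  ext k
  rw [coeff_reverse, natDegree_rho, coeff_rho]
  simp only [coeff_sub, coeff_one, finsetSum_coeff, coeff_C_mul_X_pow]
  rw [sum_ite_eq]
  simp only [← revAtFun_eq, revAtFun, mem_Icc]
  split_ifs <;> first | rfl | omega

theorem rho_map {S : Type*} [CommRing S] (f : R →+* S) (a : ℕ → R) (q : ℕ) :
    (rho a q).map f = rho (fun j => f (a j)) q := by
  simp [rho, Polynomial.map_sum]

end Rho

noncomputable def geomSeries (l : ℂ) : PowerSeries ℂ := PowerSeries.mk (l ^ ·)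

@[simp] theorem coeff_geomSeries (l : ℂ) (n : ℕ) :
    PowerSeries.coeff n (geomSeries l) = l ^ n :=
  PowerSeries.coeff_mk _ _

theorem one_sub_C_mul_X_mul_geomSeries (l : ℂ) :
    (1 - PowerSeries.C l * PowerSeries.X) * geomSeries l = 1 := by
  have : geomSeries l = PowerSeries.rescale l (PowerSeries.mk 1) := by
    ext n; simp [PowerSeries.coeff_rescale]
  rw [this, ← PowerSeries.rescale_X, ← map_one (PowerSeries.rescale l), ← map_sub, ← map_mul,
    mul_comm, PowerSeries.mk_one_mul_one_sub_eq_one]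

theorem geomSeries_mul_geomSeries {l m : ℂ} (h : l ≠ m) :
    geomSeries l * geomSeries m = (l - m)⁻¹ • (l • geomSeries l - m • geomSeries m) := by
  rw [eq_inv_smul_iff₀ (sub_ne_zero.2 h)]
  ext n
  simp only [PowerSeries.coeff_smul, PowerSeries.coeff_mul, map_sub, coeff_geomSeries, smul_eq_mul,
    Nat.sum_antidiagonal_eq_sum_range_succ_mk]
  rw [mul_comm, ← pow_succ', ← pow_succ', ← geom_sum₂_mul, Nat.add_sub_cancel]

def boundedCoeffs : Submodule ℂ (PowerSeries ℂ) where
  carrier := {F | Memℓp (fun n => PowerSeries.coeff n F) ∞}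
  add_mem' {F G} hF hG := by
    simp only [Set.mem_ofPred_eq, map_add] at hF hG ⊢
    exact hF.add hG
  zero_mem' := by
    simp only [Set.mem_ofPred_eq, map_zero]
    exact zero_memℓp
  smul_mem' c F hF := by
    simp only [Set.mem_ofPred_eq, map_smul] at hF ⊢
    exact hF.const_smul c

theorem mem_boundedCoeffs {F : PowerSeries ℂ} :
    F ∈ boundedCoeffs ↔ Memℓp (fun n => PowerSeries.coeff n F) ∞ :=
  Iff.rfl

theorem mem_boundedCoeffs_of_norm_le {F : PowerSeries ℂ} (K : ℝ)
    (hF : ∀ n, ‖PowerSeries.coeff n F‖ ≤ K) : F ∈ boundedCoeffs :=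
  mem_boundedCoeffs.2 <| memℓp_infty ⟨K, by rintro _ ⟨n, rfl⟩; exact hF n⟩

theorem exists_norm_coeff_le {F : PowerSeries ℂ} (hF : F ∈ boundedCoeffs) :
    ∃ K, ∀ n, ‖PowerSeries.coeff n F‖ ≤ K := by
  obtain ⟨K, hK⟩ := memℓp_infty_iff.1 (mem_boundedCoeffs.1 hF)
  exact ⟨K, fun n => hK ⟨n, rfl⟩⟩

theorem one_mem_boundedCoeffs : (1 : PowerSeries ℂ) ∈ boundedCoeffs :=
  mem_boundedCoeffs_of_norm_le 1 fun n => by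
    rw [PowerSeries.coeff_one]; split_ifs <;> simp

theorem geomSeries_mem_boundedCoeffs {l : ℂ} (hl : ‖l‖ ≤ 1) : geomSeries l ∈ boundedCoeffs :=
  mem_boundedCoeffs_of_norm_le 1 fun n => by
    simpa using pow_le_one₀ (norm_nonneg l) hl

theorem geomSeries_mul_mem_boundedCoeffs {l : ℂ} (hl : ‖l‖ < 1) {F : PowerSeries ℂ}
    (hF : F ∈ boundedCoeffs) : geomSeries l * F ∈ boundedCoeffs := by
  obtain ⟨K, hK⟩ := exists_norm_coeff_le hF
  have hK0 : 0 ≤ K := (norm_nonneg _).trans (hK 0)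
  refine mem_boundedCoeffs_of_norm_le (K / (1 - ‖l‖)) fun n => ?_
  rw [PowerSeries.coeff_mul, Nat.sum_antidiagonal_eq_sum_range_succ_mk]
  calc ‖∑ i ∈ range (n + 1), PowerSeries.coeff i (geomSeries l) * PowerSeries.coeff (n - i) F‖
      ≤ ∑ i ∈ range (n + 1), ‖l‖ ^ i * K := by
        refine (norm_sum_le _ _).trans (sum_le_sum fun i _ => ?_)
        rw [norm_mul, coeff_geomSeries, norm_pow]
        exact mul_le_mul_of_nonneg_left (hK _) (by positivity)
    _ ≤ K / (1 - ‖l‖) := by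
        rw [← sum_mul, ← Nat.Ico_zero_eq_range, div_eq_mul_inv, mul_comm K]
        gcongr
        simpa using geom_sum_Ico_le_of_lt_one (norm_nonneg l) hl (m := 0) (n := n + 1)

theorem prod_geomSeries_mul_mem_boundedCoeffs {S : Multiset ℂ} (hS : ∀ l ∈ S, ‖l‖ < 1)
    {F : PowerSeries ℂ} (hF : F ∈ boundedCoeffs) : (S.map geomSeries).prod * F ∈ boundedCoeffs := by
  induction S using Multiset.induction_on with
  | empty => simpa using hF
  | cons l S ih =>
    rw [Multiset.map_cons, Multiset.prod_cons, mul_assoc]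
    exact geomSeries_mul_mem_boundedCoeffs (hS l (Multiset.mem_cons_self l S))
      (ih fun m hm => hS m (Multiset.mem_cons_of_mem hm))

theorem prod_geomSeries_mem_span {U : Multiset ℂ} (hU : U.Nodup) :
    (U.map geomSeries).prod ∈ Submodule.span ℂ (insert 1 (geomSeries '' {z | z ∈ U})) := by
  induction U using Multiset.induction_on with
  | empty => exact Submodule.subset_span (Set.mem_insert _ _)
  | cons l U ih =>
    obtain ⟨hlU, hU⟩ := Multiset.nodup_cons.1 hU
    have hgeom : ∀ m ∈ l ::ₘ U,
        geomSeries m ∈ Submodule.span ℂ (insert 1 (geomSeries '' {z | z ∈ l ::ₘ U})) :=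
      fun m hm => Submodule.subset_span (Set.mem_insert_of_mem _ ⟨m, hm, rfl⟩)
    rw [Multiset.map_cons, Multiset.prod_cons]
    have hP := ih hU
    generalize (U.map geomSeries).prod = P at hP ⊢
    induction hP using Submodule.span_induction with
    | mem x hx =>
      rcases hx with rfl | ⟨m, hm, rfl⟩
      · simpa using hgeom l (Multiset.mem_cons_self l U)
      · replace hm : m ∈ U := hm
        rw [geomSeries_mul_geomSeries fun hlm : l = m => hlU (hlm ▸ hm)]
        refine Submodule.smul_mem _ _ (sub_mem ?_ ?_) <;> refine Submodule.smul_mem _ _ (hgeom _ ?_)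
        · exact Multiset.mem_cons_self l U
        · exact Multiset.mem_cons_of_mem hm
    | zero => simp
    | add x y _ _ hx hy => simpa [mul_add] using add_mem hx hy
    | smul c x _ hx => simpa [mul_smul_comm] using Submodule.smul_mem _ c hx

theorem prod_geomSeries_mem_boundedCoeffs {R : Multiset ℂ}
    (hR : ∀ l ∈ R, ‖l‖ ≤ 1 ∧ (‖l‖ = 1 → R.count l = 1)) :
    (R.map geomSeries).prod ∈ boundedCoeffs := by
  rw [← Multiset.filter_add_not (fun l => ‖l‖ = 1) R, Multiset.map_add, Multiset.prod_add,
    mul_comm]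
  refine prod_geomSeries_mul_mem_boundedCoeffs (fun l hl => ?_) ?_
  · obtain ⟨hlR, hl1⟩ := Multiset.mem_filter.1 hl
    exact (hR l hlR).1.lt_of_ne hl1
  · have hU : (R.filter fun l => ‖l‖ = 1).Nodup := by
      refine Multiset.nodup_iff_count_le_one.2 fun l => ?_
      rw [Multiset.count_filter]
      split_ifs with hl
      · by_cases hlR : l ∈ R
        · exact (hR l hlR).2 hl |>.le
        · simp [Multiset.count_eq_zero_of_notMem hlR]
      · exact zero_le_one
    refine Submodule.span_le.2 ?_ (prod_geomSeries_mem_span hU)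
    rintro _ (rfl | ⟨m, hm, rfl⟩)
    · exact one_mem_boundedCoeffs
    · exact geomSeries_mem_boundedCoeffs (Multiset.mem_filter.1 hm).2.le

noncomputable def fundamentalSolution (α : ℕ → ℝ) (q n : ℕ) : ℝ :=
  PowerSeries.coeff n ((rho α q).reverse : PowerSeries ℝ)⁻¹

theorem reverse_rho_mul_inv (α : ℕ → ℝ) (q : ℕ) :
    ((rho α q).reverse : PowerSeries ℝ) * ((rho α q).reverse : PowerSeries ℝ)⁻¹ = 1 :=
  PowerSeries.mul_inv_cancel _ (by simp [coeff_zero_reverse, (monic_rho α q).leadingCoeff])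

theorem map_inv_reverse_rho (α : ℕ → ℝ) (q : ℕ) :
    PowerSeries.map (algebraMap ℝ ℂ) ((rho α q).reverse : PowerSeries ℝ)⁻¹ =
      ((rho (fun j => (α j : ℂ)) q).roots.map geomSeries).prod := by
  set ρ := rho (fun j => (α j : ℂ)) q
  have hρ : ρ.reverse = (rho α q).reverse.map (algebraMap ℝ ℂ) := by
    rw [reverse, reverse, natDegree_rho, natDegree_rho, ← reflect_map, rho_map]
    rfl
  have hinv : PowerSeries.map (algebraMap ℝ ℂ) ((rho α q).reverse : PowerSeries ℝ)⁻¹ *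
      (ρ.reverse : PowerSeries ℂ) = 1 := by
    rw [hρ, polynomial_map_coe, ← map_mul, mul_comm, reverse_rho_mul_inv, map_one]
  have hprod : (ρ.reverse : PowerSeries ℂ) * (ρ.roots.map geomSeries).prod = 1 := by
    rw [reverse_eq_prod_roots (IsAlgClosed.splits ρ) (monic_rho _ q),
      ← coeToPowerSeries.ringHom_apply, map_multiset_prod, Multiset.map_map,
      ← Multiset.prod_map_mul]
    simp [one_sub_C_mul_X_mul_geomSeries]
  exact left_inv_eq_right_inv hinv hprod

theorem exists_abs_fundamentalSolution_le {α : ℕ → ℝ} {q : ℕ}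
    (hroot : ∀ z : ℂ, (rho (fun j => (α j : ℂ)) q).IsRoot z →
      ‖z‖ ≤ 1 ∧ (‖z‖ = 1 → (rho (fun j => (α j : ℂ)) q).rootMultiplicity z = 1)) :
    ∃ K > 0, ∀ n, |fundamentalSolution α q n| ≤ K := by
  have hmem := prod_geomSeries_mem_boundedCoeffs (R := (rho (fun j => (α j : ℂ)) q).roots)
    fun l hl => by
      have hl' := (mem_roots (monic_rho _ q).ne_zero).1 hl
      simpa [count_roots] using hroot l hl'
  obtain ⟨K, hK⟩ := exists_norm_coeff_le hmem
  refine ⟨max K 1, by positivity, fun n => le_max_of_le_left ?_⟩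
  simpa [← map_inv_reverse_rho, fundamentalSolution] using hK n

section Recurrence

variable {E : Type*} [AddCommGroup E] [Module ℝ E] (α : ℕ → ℝ) (q : ℕ)

theorem eq_sum_fundamentalSolution_smul (e : ℕ → E) (n : ℕ) :
    e n = ∑ p ∈ antidiagonal n, fundamentalSolution α q p.1 •
      ∑ r ∈ antidiagonal p.2, (rho α q).reverse.coeff r.1 • e r.2 := by
  rw [sum_antidiagonal_smul_sum_antidiagonal]
  have hconv : ∀ m, ∑ r ∈ antidiagonal m,
      fundamentalSolution α q r.1 * (rho α q).reverse.coeff r.2 = if m = 0 then 1 else 0 := by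
    intro m
    rw [← PowerSeries.coeff_one, ← reverse_rho_mul_inv α q, mul_comm, PowerSeries.coeff_mul]
    simp [fundamentalSolution]
  simp only [hconv, ite_smul, one_smul, zero_smul]
  rw [sum_antidiagonal_ite_fst e (Nat.zero_le n), Nat.sub_zero]

theorem sum_antidiagonal_coeff_reverse_rho_smul (e : ℕ → E) {n : ℕ} (hn : q ≤ n) :
    ∑ r ∈ antidiagonal n, (rho α q).reverse.coeff r.1 • e r.2 =
      e n - ∑ i ∈ Icc 1 q, α (q - i) • e (n - i) := by
  rw [reverse_rho]
  simp only [coeff_sub, coeff_one, finsetSum_coeff, coeff_C_mul_X_pow, sub_smul, sum_smul,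
    ite_smul, one_smul, zero_smul, sum_sub_distrib]
  rw [sum_antidiagonal_ite_fst e (Nat.zero_le n), Nat.sub_zero, sum_comm]
  congr 1
  refine sum_congr rfl fun i hi => ?_
  exact sum_antidiagonal_ite_fst (fun j => α (q - i) • e j) ((mem_Icc.1 hi).2.trans hn)

end Recurrence

theorem norm_le_mul_sum_norm_sub_sum_smul {E : Type*} [NormedAddCommGroup E] [NormedSpace ℝ E]
    {α : ℕ → ℝ} {q : ℕ} {K : ℝ} (hK : ∀ n, |fundamentalSolution α q n| ≤ K) {e : ℕ → E}
    (he : ∀ n < q, e n = 0) (n : ℕ) :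
    ‖e n‖ ≤ K * ∑ k ∈ Icc q n, ‖e k - ∑ i ∈ Icc 1 q, α (q - i) • e (k - i)‖ := by
  set δ : ℕ → E := fun j => ∑ r ∈ antidiagonal j, (rho α q).reverse.coeff r.1 • e r.2
  have hδ : ∀ j < q, δ j = 0 := fun j hj =>
    sum_eq_zero fun r hr => by
      rw [he r.2 (by have := mem_antidiagonal.1 hr; omega), smul_zero]
  calc ‖e n‖ = ‖∑ p ∈ antidiagonal n, fundamentalSolution α q p.1 • δ p.2‖ := by
        rw [← eq_sum_fundamentalSolution_smul]
    _ ≤ ∑ p ∈ antidiagonal n, K * ‖δ p.2‖ := by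
        refine (norm_sum_le _ _).trans (sum_le_sum fun p _ => ?_)
        rw [norm_smul, Real.norm_eq_abs]
        exact mul_le_mul_of_nonneg_right (hK _) (norm_nonneg _)
    _ = K * ∑ j ∈ range (n + 1), ‖δ j‖ := by
        rw [← mul_sum, sum_antidiagonal_snd (fun j => ‖δ j‖)]
    _ = K * ∑ k ∈ Icc q n, ‖e k - ∑ i ∈ Icc 1 q, α (q - i) • e (k - i)‖ := by
        have hsub : Icc q n ⊆ range (n + 1) := fun k hk => mem_range_succ_iff.2 (mem_Icc.1 hk).2
        rw [← sum_subset hsub fun j hjn hj => by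
          simp only [mem_Icc, mem_range] at hjn hj
          rw [hδ j (by omega), norm_zero]]
        exact congrArg _ (sum_congr rfl fun k hk =>
          congrArg _ (sum_antidiagonal_coeff_reverse_rho_smul α q e (mem_Icc.1 hk).1))

section Defect

variable {E : Type*} [NormedAddCommGroup E] [NormedSpace ℝ E]
  (α β : ℕ → ℝ) (f : E → ℝ → E) (g : E → ℝ → ℝ → E) (w : ℕ → ℕ → ℝ) (q : ℕ) (h : ℝ)

-- For `y n = x (n * h)` this is the local truncation error `τₙ`.
noncomputable def defect (y : ℕ → E) (n : ℕ) : E :=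
  y n - (∑ i ∈ Icc 1 q, α (q - i) • y (n - i))
    - h • (∑ i ∈ range (q + 1), β (q - i) • f (y (n - i)) (((n - i : ℕ) : ℝ) * h))
    - h • (∑ i ∈ range (n + 1), w n i • g (y i) ((i : ℝ) * h) ((n : ℝ) * h))

variable {α β f g w q h}

theorem defect_eq_zero_iff {y : ℕ → E} {n : ℕ} :
    defect α β f g w q h y n = 0 ↔ y n = (∑ i ∈ Icc 1 q, α (q - i) • y (n - i))
      + h • (∑ i ∈ range (q + 1), β (q - i) • f (y (n - i)) (((n - i : ℕ) : ℝ) * h))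
      + h • (∑ i ∈ range (n + 1), w n i • g (y i) ((i : ℝ) * h) ((n : ℝ) * h)) := by
  rw [defect, sub_sub, sub_sub, sub_eq_zero, add_assoc]

theorem norm_sub_sum_smul_sub_le {L M : ℝ} (hh : 0 ≤ h)
    (hf : ∀ (u u' : E) (t : ℝ), ‖f u t - f u' t‖ ≤ L * ‖u - u'‖)
    (hg : ∀ (u u' : E) (s t : ℝ), ‖g u s t - g u' s t‖ ≤ L * ‖u - u'‖)
    {n : ℕ} (hw : ∀ i ≤ n, |w n i| ≤ M * h) (y z : ℕ → E) :
    ‖(y n - z n) - ∑ i ∈ Icc 1 q, α (q - i) • (y (n - i) - z (n - i))‖ ≤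
      ‖defect α β f g w q h y n - defect α β f g w q h z n‖
        + h * L * ∑ i ∈ range (q + 1), |β (q - i)| * ‖y (n - i) - z (n - i)‖
        + h * (M * h) * L * ∑ i ∈ range (n + 1), ‖y i - z i‖ := by
  have hsplit : (y n - z n) - ∑ i ∈ Icc 1 q, α (q - i) • (y (n - i) - z (n - i)) =
      (defect α β f g w q h y n - defect α β f g w q h z n)
        + h • ∑ i ∈ range (q + 1), β (q - i) •
            (f (y (n - i)) (((n - i : ℕ) : ℝ) * h) - f (z (n - i)) (((n - i : ℕ) : ℝ) * h))
        + h • ∑ i ∈ range (n + 1), w n i •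
            (g (y i) ((i : ℝ) * h) ((n : ℝ) * h) - g (z i) ((i : ℝ) * h) ((n : ℝ) * h)) := by
    simp only [defect, smul_sub, sum_sub_distrib]
    abel
  have hf_sum : ‖h • ∑ i ∈ range (q + 1), β (q - i) •
      (f (y (n - i)) (((n - i : ℕ) : ℝ) * h) - f (z (n - i)) (((n - i : ℕ) : ℝ) * h))‖ ≤
      h * L * ∑ i ∈ range (q + 1), |β (q - i)| * ‖y (n - i) - z (n - i)‖ := by
    rw [norm_smul, Real.norm_eq_abs, abs_of_nonneg hh, mul_assoc, mul_sum]
    refine mul_le_mul_of_nonneg_left ((norm_sum_le _ _).trans (sum_le_sum fun i _ => ?_)) hh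
    rw [norm_smul, Real.norm_eq_abs, mul_left_comm]
    exact mul_le_mul_of_nonneg_left (hf _ _ _) (abs_nonneg _)
  have hg_sum : ‖h • ∑ i ∈ range (n + 1), w n i •
      (g (y i) ((i : ℝ) * h) ((n : ℝ) * h) - g (z i) ((i : ℝ) * h) ((n : ℝ) * h))‖ ≤
      h * (M * h) * L * ∑ i ∈ range (n + 1), ‖y i - z i‖ := by
    rw [norm_smul, Real.norm_eq_abs, abs_of_nonneg hh]
    calc _ ≤ h * ∑ i ∈ range (n + 1), M * h * (L * ‖y i - z i‖) := by
          refine mul_le_mul_of_nonneg_left ((norm_sum_le _ _).trans (sum_le_sum fun i hi => ?_)) hh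
          have hwi := hw i (mem_range_succ_iff.1 hi)
          rw [norm_smul, Real.norm_eq_abs]
          exact mul_le_mul hwi (hg _ _ _ _) (norm_nonneg _) ((abs_nonneg _).trans hwi)
      _ = _ := by rw [← mul_sum, ← mul_sum]; ring
  rw [hsplit]
  exact norm_add₃_le.trans (add_le_add_three le_rfl hf_sum hg_sum)

theorem norm_sub_le_of_norm_defect_sub_le {K L M ε : ℝ}
    (hK : ∀ n, |fundamentalSolution α q n| ≤ K) (hL : 0 ≤ L) (hh : 0 ≤ h)
    (hf : ∀ (u u' : E) (t : ℝ), ‖f u t - f u' t‖ ≤ L * ‖u - u'‖)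
    (hg : ∀ (u u' : E) (s t : ℝ), ‖g u s t - g u' s t‖ ≤ L * ‖u - u'‖)
    (hw : ∀ n, ∀ i ≤ n, |w n i| ≤ M * h) {y z : ℕ → E} (hstart : ∀ n < q, y n = z n)
    (hdefect : ∀ n, q ≤ n → ‖defect α β f g w q h y n - defect α β f g w q h z n‖ ≤ ε)
    (n : ℕ) :
    ‖y n - z n‖ ≤ K * ((n + 1) * ε + h * L * ((∑ i ∈ range (q + 1), |β (q - i)|)
      + (n + 1) * (M * h)) * ∑ i ∈ range (n + 1), ‖y i - z i‖) := by
  set u : ℕ → ℝ := fun i => ‖y i - z i‖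
  have hu : ∀ i, 0 ≤ u i := fun i => norm_nonneg _
  have hK0 : 0 ≤ K := (abs_nonneg _).trans (hK 0)
  have hε : 0 ≤ ε := (norm_nonneg _).trans (hdefect q le_rfl)
  have hMh : 0 ≤ M * h := (abs_nonneg _).trans (hw 0 0 le_rfl)
  have hcard : ((Icc q n).card : ℝ) ≤ n + 1 := by
    rw [Nat.card_Icc]; exact_mod_cast Nat.sub_le _ _
  refine (norm_le_mul_sum_norm_sub_sum_smul hK (fun m hm => sub_eq_zero.2 (hstart m hm)) n).trans
    (mul_le_mul_of_nonneg_left ?_ hK0)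
  calc _ ≤ ∑ k ∈ Icc q n, (ε + h * L * ∑ i ∈ range (q + 1), |β (q - i)| * u (k - i)
          + h * (M * h) * L * ∑ i ∈ range (k + 1), u i) :=
        sum_le_sum fun k hk => (norm_sub_sum_smul_sub_le hh hf hg (hw k) y z).trans
          (by gcongr; exact hdefect k (mem_Icc.1 hk).1)
    _ ≤ (n + 1) * ε + h * L * ((∑ i ∈ range (q + 1), |β (q - i)|) * ∑ i ∈ range (n + 1), u i)
          + h * (M * h) * L * ((n + 1) * ∑ i ∈ range (n + 1), u i) := by
        rw [sum_add_distrib, sum_add_distrib, ← mul_sum, ← mul_sum, sum_const, nsmul_eq_mul]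
        refine add_le_add_three (by gcongr) (mul_le_mul_of_nonneg_left
          (sum_Icc_sum_mul_comp_sub_le hu (fun i => abs_nonneg _) q n) (by positivity))
          (mul_le_mul_of_nonneg_left ?_ (by positivity))
        refine (sum_le_sum fun k hk => sum_le_sum_of_subset_of_nonneg
          (range_subset_range.2 (Nat.add_le_add_right (mem_Icc.1 hk).2 1))
          fun i _ _ => hu i).trans ?_
        rw [sum_const, nsmul_eq_mul]
        gcongr
    _ = _ := by ring

theorem norm_sub_le_mul_exp_mul_pow {K L M C₀ T : ℝ} {p : ℕ}
    (hK : ∀ n, |fundamentalSolution α q n| ≤ K) (hL : 0 ≤ L) (hM : 0 ≤ M) (hC₀ : 0 ≤ C₀)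
    (hh : 0 < h) (hh1 : h ≤ 1)
    (hhC : h * (K * L * ((∑ i ∈ range (q + 1), |β (q - i)|) + M * (T + 1))) ≤ 1 / 2)
    (hf : ∀ (u u' : E) (t : ℝ), ‖f u t - f u' t‖ ≤ L * ‖u - u'‖)
    (hg : ∀ (u u' : E) (s t : ℝ), ‖g u s t - g u' s t‖ ≤ L * ‖u - u'‖)
    (hw : ∀ n, ∀ i ≤ n, |w n i| ≤ M * h) {y z : ℕ → E} (hstart : ∀ n < q, y n = z n)
    (hdefect : ∀ n, q ≤ n →
      ‖defect α β f g w q h y n - defect α β f g w q h z n‖ ≤ C₀ * h ^ (p + 1))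
    {n : ℕ} (hn : n * h ≤ T) :
    ‖y n - z n‖ ≤ 2 * (K * C₀ * (T + 1)) *
      Real.exp (2 * (K * L * ((∑ i ∈ range (q + 1), |β (q - i)|) + M * (T + 1))) * T) * h ^ p := by
  have hK0 : 0 ≤ K := (abs_nonneg _).trans (hK 0)
  have hT : 0 ≤ T := (by positivity : (0 : ℝ) ≤ n * h).trans hn
  set B := ∑ i ∈ range (q + 1), |β (q - i)|
  set C₂ := K * L * (B + M * (T + 1))
  have hrec : ∀ m ≤ n, ‖y m - z m‖ ≤
      K * C₀ * (T + 1) * h ^ p + h * C₂ * ∑ i ∈ range (m + 1), ‖y i - z i‖ := by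
    intro m hm
    have hmh : ((m : ℝ) + 1) * h ≤ T + 1 := by
      have : (m : ℝ) ≤ n := by exact_mod_cast hm
      nlinarith
    calc _ ≤ K * ((m + 1) * (C₀ * h ^ (p + 1)) + h * L * (B + (m + 1) * (M * h)) *
          ∑ i ∈ range (m + 1), ‖y i - z i‖) :=
        norm_sub_le_of_norm_defect_sub_le hK hL hh.le hf hg hw hstart hdefect m
      _ = K * (((m + 1) * h) * C₀ * h ^ p + h * L * (B + M * ((m + 1) * h)) *
          ∑ i ∈ range (m + 1), ‖y i - z i‖) := by ring
      _ ≤ K * ((T + 1) * C₀ * h ^ p + h * L * (B + M * (T + 1)) *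
          ∑ i ∈ range (m + 1), ‖y i - z i‖) := by gcongr
      _ = _ := by ring
  calc _ ≤ 2 * (K * C₀ * (T + 1) * h ^ p) * Real.exp (2 * (h * C₂) * n) :=
        le_two_mul_exp_of_le_add_mul_sum (fun _ => norm_nonneg _) (by positivity) hhC hrec
    _ ≤ 2 * (K * C₀ * (T + 1) * h ^ p) * Real.exp (2 * C₂ * T) := by
        rw [show 2 * (h * C₂) * n = 2 * C₂ * (n * h) by ring]
        gcongr
    _ = _ := by ring

end Defect

end LinearMultistep

open Finset in
theorem stmt_5_general (d q : ℕ)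
    (α : ℕ → ℝ) (β : ℕ → ℝ) (L M C₀ : ℝ) (hL : 0 < L) (hM : 0 < M) (hC₀ : 0 < C₀)
    (p : ℕ)
    -- root condition for p(s) = s^q - ∑_{i=1}^q α_{q-i} s^{q-i} = s^q - ∑_{j=0}^{q-1} α_j s^j
    (hroot : ∀ z : ℂ,
      (Polynomial.X ^ q
        - ∑ j ∈ Finset.range q, Polynomial.C ((α j : ℂ)) * Polynomial.X ^ j).IsRoot z →
      ‖z‖ ≤ 1 ∧ (‖z‖ = 1 →
        (Polynomial.X ^ q
          - ∑ j ∈ Finset.range q, Polynomial.C ((α j : ℂ)) * Polynomial.X ^ j).rootMultiplicity z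
          = 1))
    (f : (Fin d → ℝ) → ℝ → (Fin d → ℝ)) (g : (Fin d → ℝ) → ℝ → ℝ → (Fin d → ℝ))
    -- uniform Lipschitz condition in the first argument (sup-norm on ℝ^d)
    (hf : ∀ (u u' : Fin d → ℝ) (t : ℝ), ‖f u t - f u' t‖ ≤ L * ‖u - u'‖)
    (hg : ∀ (u u' : Fin d → ℝ) (s t : ℝ), ‖g u s t - g u' s t‖ ≤ L * ‖u - u'‖)
    (w : ℝ → ℕ → ℕ → ℝ)
    (hw : ∀ h : ℝ, 0 < h → ∀ n i : ℕ, i ≤ n → |w h n i| ≤ M * h)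
    (x : ℝ → (Fin d → ℝ))
    -- local truncation errors of order p
    (hτ : ∀ h : ℝ, 0 < h → ∀ n : ℕ, q ≤ n →
      ‖x ((n : ℝ) * h)
          - (∑ i ∈ Finset.Icc 1 q, α (q - i) • x (((n - i : ℕ) : ℝ) * h))
          - h • (∑ i ∈ Finset.range (q + 1),
              β (q - i) • f (x (((n - i : ℕ) : ℝ) * h)) (((n - i : ℕ) : ℝ) * h))
          - h • (∑ i ∈ Finset.range (n + 1),
              w h n i • g (x ((i : ℝ) * h)) ((i : ℝ) * h) ((n : ℝ) * h))‖
        ≤ C₀ * h ^ (p + 1)) :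
    ∀ T > 0, ∃ h₀ > 0, ∃ C > 0, ∀ h : ℝ, 0 < h → h ≤ h₀ →
      ∀ xn : ℕ → (Fin d → ℝ),
        -- exact starting values
        (∀ i : ℕ, i < q → xn i = x ((i : ℝ) * h)) →
        -- the numerical scheme
        (∀ n : ℕ, q ≤ n →
          xn n = (∑ i ∈ Finset.Icc 1 q, α (q - i) • xn (n - i))
            + h • (∑ i ∈ Finset.range (q + 1),
                β (q - i) • f (xn (n - i)) (((n - i : ℕ) : ℝ) * h))
            + h • (∑ i ∈ Finset.range (n + 1),
                w h n i • g (xn i) ((i : ℝ) * h) ((n : ℝ) * h))) →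
        ∀ n : ℕ, (n : ℝ) * h ≤ T → ‖x ((n : ℝ) * h) - xn n‖ ≤ C * h ^ p := by
  intro T hT
  obtain ⟨K, hK0, hK⟩ := LinearMultistep.exists_abs_fundamentalSolution_le hroot
  set C₂ := K * L * ((∑ i ∈ range (q + 1), |β (q - i)|) + M * (T + 1))
  have hC₂ : 0 < C₂ := by positivity
  refine ⟨min 1 (1 / (2 * C₂)), by positivity, 2 * (K * C₀ * (T + 1)) * Real.exp (2 * C₂ * T),
    by positivity, fun h hh hh₀ xn hstart hscheme n hn => ?_⟩
  have hhC₂ : h * C₂ ≤ 1 / 2 := by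
    have := hh₀.trans (min_le_right _ _)
    rw [le_div_iff₀ (by positivity)] at this
    linarith
  refine LinearMultistep.norm_sub_le_mul_exp_mul_pow hK hL.le hM.le hC₀.le hh
    (hh₀.trans (min_le_left _ _)) hhC₂ hf hg (hw h hh) (fun i hi => (hstart i hi).symm)
    (fun k hk => ?_) hn
  rw [LinearMultistep.defect_eq_zero_iff.2 (hscheme k hk), sub_zero]
  exact hτ h hh k hk

open Finset in
/-- Convergence for LMM with memory (Theorem 4.1): root condition plus consistency of
order `p` implies global error of order `p`. -/
theorem stmt_5 (d q : ℕ) (hd : 1 ≤ d) (hq : 1 ≤ q)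
    (α : ℕ → ℝ) (β : ℕ → ℝ) (L M C₀ : ℝ) (hL : 0 < L) (hM : 0 < M) (hC₀ : 0 < C₀)
    (p : ℕ) (hp : 1 ≤ p)
    -- root condition for p(s) = s^q - ∑_{i=1}^q α_{q-i} s^{q-i} = s^q - ∑_{j=0}^{q-1} α_j s^j
    (hroot : ∀ z : ℂ,
      (Polynomial.X ^ q
        - ∑ j ∈ Finset.range q, Polynomial.C ((α j : ℂ)) * Polynomial.X ^ j).IsRoot z →
      ‖z‖ ≤ 1 ∧ (‖z‖ = 1 →
        (Polynomial.X ^ q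
          - ∑ j ∈ Finset.range q, Polynomial.C ((α j : ℂ)) * Polynomial.X ^ j).rootMultiplicity z
          = 1))
    (f : (Fin d → ℝ) → ℝ → (Fin d → ℝ)) (g : (Fin d → ℝ) → ℝ → ℝ → (Fin d → ℝ))
    -- uniform Lipschitz condition in the first argument (sup-norm on ℝ^d)
    (hf : ∀ (u u' : Fin d → ℝ) (t : ℝ), ‖f u t - f u' t‖ ≤ L * ‖u - u'‖)
    (hg : ∀ (u u' : Fin d → ℝ) (s t : ℝ), ‖g u s t - g u' s t‖ ≤ L * ‖u - u'‖)
    (w : ℝ → ℕ → ℕ → ℝ)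
    (hw : ∀ h : ℝ, 0 < h → ∀ n i : ℕ, i ≤ n → |w h n i| ≤ M * h)
    (x : ℝ → (Fin d → ℝ))
    -- local truncation errors of order p
    (hτ : ∀ h : ℝ, 0 < h → ∀ n : ℕ, q ≤ n →
      ‖x ((n : ℝ) * h)
          - (∑ i ∈ Finset.Icc 1 q, α (q - i) • x (((n - i : ℕ) : ℝ) * h))
          - h • (∑ i ∈ Finset.range (q + 1),
              β (q - i) • f (x (((n - i : ℕ) : ℝ) * h)) (((n - i : ℕ) : ℝ) * h))
          - h • (∑ i ∈ Finset.range (n + 1),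
              w h n i • g (x ((i : ℝ) * h)) ((i : ℝ) * h) ((n : ℝ) * h))‖
        ≤ C₀ * h ^ (p + 1)) :
    ∀ T > 0, ∃ h₀ > 0, ∃ C > 0, ∀ h : ℝ, 0 < h → h ≤ h₀ →
      ∀ xn : ℕ → (Fin d → ℝ),
        -- exact starting values
        (∀ i : ℕ, i < q → xn i = x ((i : ℝ) * h)) →
        -- the numerical scheme
        (∀ n : ℕ, q ≤ n →
          xn n = (∑ i ∈ Finset.Icc 1 q, α (q - i) • xn (n - i))
            + h • (∑ i ∈ Finset.range (q + 1),
                β (q - i) • f (xn (n - i)) (((n - i : ℕ) : ℝ) * h))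
            + h • (∑ i ∈ Finset.range (n + 1),
                w h n i • g (xn i) ((i : ℝ) * h) ((n : ℝ) * h))) →
        ∀ n : ℕ, (n : ℝ) * h ≤ T → ‖x ((n : ℝ) * h) - xn n‖ ≤ C * h ^ p :=
  stmt_5_general d q α β L M C₀ hL hM hC₀ p hroot f g hf hg w hw x hτ
end

section
/- Let λ ∈ ℝ and let k : [0,∞) → ℝ be integrable (k ∈ L¹([0,∞))). Suppose λ + ∫_0^∞ |k(ξ)| dξ < 0. Let x : [0,∞) → ℝ be a continuous, differentiable function satisfying ẋ(t) = λ x(t) + ∫_0^t k(t − s) x(s) ds for all t ≥ 0, with arbitrary initial value x(0) = x₀. Then lim_{t → ∞} x(t) = 0. -/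
/-!
Write `μ = -λ` and `β = ∫₀^∞ |k| < μ`. By variation of constants, if the memory term is bounded
by `D` on `[a, t]` then `|x t| ≤ e^{λ(t-a)} |x a| + D / μ`. At a maximum point of `|x|` on
`[0, t]` the memory term is at most `β max |x|`, which yields the uniform bound
`|x| ≤ C := μ |x 0| / (μ - β)`. If moreover `|x| ≤ B` from time `T` on, split the convolution at
`T`: the early part only sees the kernel mass `∫_{u-T}^u |k|`, which tends to `0`, so
`limsup |x| ≤ (C ε + β B) / μ` for every `ε > 0`. Taking `B = L + ε` with `L = limsup |x|` and
letting `ε → 0` gives `L ≤ (β / μ) L`, hence `L = 0`.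
-/

open MeasureTheory Filter Set Real Topology

theorem intervalIntegrable_of_integrableOn_Ici {E : Type*} [NormedAddCommGroup E] {f : ℝ → E}
    {c a b : ℝ}
    (hf : IntegrableOn f (Ici c)) (ha : c ≤ a) (hb : c ≤ b) : IntervalIntegrable f volume a b :=
  (hf.mono_set fun _ hξ => (le_min ha hb).trans hξ.1).intervalIntegrable

theorem intervalIntegral_le_setIntegral_Ioi {f : ℝ → ℝ} {a b : ℝ} (hf : IntegrableOn f (Ioi a))
    (hf0 : ∀ ξ, 0 ≤ f ξ) (hab : a ≤ b) : ∫ ξ in a..b, f ξ ≤ ∫ ξ in Ioi a, f ξ := by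
  rw [intervalIntegral.integral_of_le hab]
  exact setIntegral_mono_set hf (.of_forall hf0) Ioc_subset_Ioi_self.eventuallyLE

theorem tendsto_intervalIntegral_sub_atTop {f : ℝ → ℝ} {a : ℝ} (hf : IntegrableOn f (Ioi a))
    (T : ℝ) : Tendsto (fun u => ∫ ξ in (u - T)..u, f ξ) atTop (𝓝 0) := by
  have hint : ∀ v, a ≤ v → IntervalIntegrable f volume a v := fun v hv =>
    (intervalIntegrable_iff_integrableOn_Ioc_of_le hv).2 (hf.mono_set Ioc_subset_Ioi_self)
  have hlim := intervalIntegral_tendsto_integral_Ioi a hf tendsto_id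
  have hlim' := intervalIntegral_tendsto_integral_Ioi a hf
    (tendsto_atTop_add_const_right _ (-T) tendsto_id)
  simp only [id, ← sub_eq_add_neg] at hlim hlim'
  have hdiff := hlim.sub hlim'
  rw [sub_self] at hdiff
  refine hdiff.congr' ?_
  filter_upwards [eventually_ge_atTop (a + |T|)] with u hu
  exact intervalIntegral.integral_interval_sub_left (hint u (by linarith [abs_nonneg T]))
    (hint _ (by linarith [le_abs_self T]))

theorem abs_integral_comp_sub_mul_le {k x : ℝ → ℝ} {u a b C : ℝ} (hab : a ≤ b)
    (hk : IntervalIntegrable k volume (u - b) (u - a)) (hC : ∀ s ∈ Icc a b, |x s| ≤ C) :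
    |∫ s in a..b, k (u - s) * x s| ≤ C * ∫ ξ in (u - b)..(u - a), |k ξ| := by
  have hk' : IntervalIntegrable (fun s => |k (u - s)|) volume a b := by
    simpa using (hk.abs.comp_sub_left u).symm
  calc |∫ s in a..b, k (u - s) * x s| ≤ ∫ s in a..b, |k (u - s)| * C :=
        intervalIntegral.norm_integral_le_of_norm_le hab (.of_forall fun s hs => by
          rw [Real.norm_eq_abs, abs_mul]
          exact mul_le_mul_of_nonneg_left (hC s (Ioc_subset_Icc_self hs)) (abs_nonneg _))
          (hk'.mul_const C)
    _ = C * ∫ ξ in (u - b)..(u - a), |k ξ| := by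
      rw [intervalIntegral.integral_mul_const,
        intervalIntegral.integral_comp_sub_left (fun ξ => |k ξ|), mul_comm]

theorem abs_integral_comp_sub_mul_le_add {k x : ℝ → ℝ} {u T C₁ C₂ : ℝ} (hT : 0 ≤ T)
    (hTu : T ≤ u) (hk : IntegrableOn k (Ici 0)) (hx : ContinuousOn x (Icc 0 u))
    (h₁ : ∀ s ∈ Icc 0 T, |x s| ≤ C₁) (h₂ : ∀ s ∈ Icc T u, |x s| ≤ C₂) :
    |∫ s in (0 : ℝ)..u, k (u - s) * x s| ≤
      C₁ * (∫ ξ in (u - T)..u, |k ξ|) + C₂ * ∫ ξ in (0 : ℝ)..(u - T), |k ξ| := by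
  have hu : 0 ≤ u := hT.trans hTu
  have hint : IntervalIntegrable (fun s => k (u - s) * x s) volume 0 u := by
    have := (intervalIntegrable_of_integrableOn_Ici hk le_rfl hu).comp_sub_left u
    simp only [sub_zero, sub_self] at this
    exact this.symm.mul_continuousOn (by rwa [uIcc_of_le hu])
  rw [← intervalIntegral.integral_add_adjacent_intervals
    (hint.mono_set (uIcc_subset_uIcc left_mem_uIcc (mem_uIcc_of_le hT hTu)))
    (hint.mono_set (uIcc_subset_uIcc (mem_uIcc_of_le hT hTu) right_mem_uIcc))]
  have hleft : |∫ s in (0 : ℝ)..T, k (u - s) * x s| ≤ C₁ * ∫ ξ in (u - T)..u, |k ξ| := by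
    simpa using abs_integral_comp_sub_mul_le (u := u) hT
      (intervalIntegrable_of_integrableOn_Ici hk (by linarith) (by simpa)) h₁
  have hright : |∫ s in T..u, k (u - s) * x s| ≤ C₂ * ∫ ξ in (0 : ℝ)..(u - T), |k ξ| := by
    simpa using abs_integral_comp_sub_mul_le (u := u) hTu
      (intervalIntegrable_of_integrableOn_Ici hk (by simp) (by linarith)) h₂
  exact (abs_add_le _ _).trans (add_le_add hleft hright)

theorem abs_le_of_hasDerivAt_linear {lam D a t : ℝ} {x f : ℝ → ℝ} (hlam : lam < 0)
    (ht : a ≤ t) (hx : ∀ s ∈ Icc a t, HasDerivAt x (lam * x s + f s) s)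
    (hf : ∀ s ∈ Icc a t, |f s| ≤ D) : |x t| ≤ exp (lam * (t - a)) * |x a| + D / -lam := by
  have hD : 0 ≤ D := (abs_nonneg _).trans (hf a ⟨le_rfl, ht⟩)
  set e : ℝ → ℝ := fun s => exp (-lam * (s - a))
  have he : ∀ s, HasDerivAt e (e s * -lam) s := fun s =>
    (((hasDerivAt_id' s).sub_const a).const_mul (-lam)).exp.congr_deriv (by rw [mul_one])
  have hy : ∀ s ∈ Icc a t, HasDerivAt (fun s => e s * x s) (e s * f s) s := fun s hs =>
    ((he s).mul (hx s hs)).congr_deriv (by ring)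
  have hB : ∀ s, HasDerivAt (fun s => |x a| + D / -lam * (e s - 1)) (D * e s) s := fun s =>
    (((he s).sub_const 1).const_mul (D / -lam) |>.const_add |x a|).congr_deriv
      (by field_simp [hlam.ne])
  have hyt : |e t * x t| ≤ |x a| + D / -lam * (e t - 1) := by
    refine image_norm_le_of_norm_deriv_right_le_deriv_boundary
      (fun s hs => (hy s hs).continuousAt.continuousWithinAt)
      (fun s hs => (hy s (Ico_subset_Icc_self hs)).hasDerivWithinAt) (by simp [e]) hB
      (fun s hs => ?_) ⟨ht, le_rfl⟩
    rw [Real.norm_eq_abs, abs_mul, abs_of_pos (exp_pos _), mul_comm]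
    exact mul_le_mul_of_nonneg_right (hf s (Ico_subset_Icc_self hs)) (exp_pos _).le
  have hexp_mul : exp (lam * (t - a)) * e t = 1 := by
    rw [← exp_add, neg_mul, add_neg_cancel, exp_zero]
  calc |x t| = exp (lam * (t - a)) * |e t * x t| := by
        rw [abs_mul, abs_of_pos (exp_pos _), ← mul_assoc, hexp_mul, one_mul]
    _ ≤ exp (lam * (t - a)) * (|x a| + D / -lam * (e t - 1)) := by gcongr
    _ = exp (lam * (t - a)) * |x a| + D / -lam * (1 - exp (lam * (t - a))) := by
      linear_combination D / -lam * hexp_mul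
    _ ≤ exp (lam * (t - a)) * |x a| + D / -lam := by
      have : 0 ≤ D / -lam * exp (lam * (t - a)) :=
        mul_nonneg (div_nonneg hD (by linarith)) (exp_pos _).le
      linarith

theorem limsup_abs_le_of_hasDerivAt_linear {lam D : ℝ} {x f : ℝ → ℝ} (hlam : lam < 0)
    (hx : ∀ᶠ t in atTop, HasDerivAt x (lam * x t + f t) t) (hf : ∀ᶠ t in atTop, |f t| ≤ D) :
    limsup (fun t => |x t|) atTop ≤ D / -lam := by
  obtain ⟨T, hT⟩ := eventually_atTop.1 (hx.and hf)
  have hle : ∀ᶠ t in atTop, |x t| ≤ exp (lam * (t - T)) * |x T| + D / -lam := by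
    filter_upwards [eventually_ge_atTop T] with t ht
    exact abs_le_of_hasDerivAt_linear hlam ht (fun s hs => (hT s hs.1).1) fun s hs => (hT s hs.1).2
  have hexp : Tendsto (fun t => exp (lam * (t - T))) atTop (𝓝 0) :=
    tendsto_exp_atBot.comp <|
      (tendsto_atTop_add_const_right _ (-T) tendsto_id).const_mul_atTop_of_neg hlam
  have hlim : Tendsto (fun t => exp (lam * (t - T)) * |x T| + D / -lam) atTop (𝓝 (D / -lam)) := by
    simpa using (hexp.mul_const |x T|).add_const (D / -lam)
  calc limsup (fun t => |x t|) atTop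
      ≤ limsup (fun t => exp (lam * (t - T)) * |x T| + D / -lam) atTop :=
        limsup_le_limsup hle (isCoboundedUnder_le_of_le atTop fun t => abs_nonneg (x t))
          hlim.isBoundedUnder_le
    _ = D / -lam := hlim.limsup_eq

theorem tendsto_zero_of_limsup_abs_nonpos {α : Type*} {l : Filter α} [l.NeBot] {x : α → ℝ}
    (hbdd : IsBoundedUnder (· ≤ ·) l fun t => |x t|)
    (hL : limsup (fun t => |x t|) l ≤ 0) : Tendsto x l (𝓝 0) :=
  (tendsto_zero_iff_abs_tendsto_zero x).2 <| tendsto_of_le_liminf_of_limsup_le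
    (le_liminf_of_le hbdd.isCoboundedUnder_ge (.of_forall fun t => abs_nonneg (x t))) hL hbdd
    (isBoundedUnder_of ⟨0, fun t => abs_nonneg (x t)⟩)

theorem abs_le_of_hasDerivAt_memory {lam : ℝ} {k x : ℝ → ℝ} (hk : IntegrableOn k (Ici 0))
    (hneg : lam + ∫ ξ in Ioi 0, |k ξ| < 0)
    (hode : ∀ t, 0 ≤ t → HasDerivAt x (lam * x t + ∫ s in (0 : ℝ)..t, k (t - s) * x s) t)
    {t : ℝ} (ht : 0 ≤ t) : |x t| ≤ |x 0| * -lam / (-lam - ∫ ξ in Ioi 0, |k ξ|) := by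
  set b := ∫ ξ in Ioi 0, |k ξ|
  have hkabs : IntegrableOn (fun ξ => |k ξ|) (Ioi 0) := (hk.mono_set Ioi_subset_Ici_self).abs
  have hb : 0 ≤ b := setIntegral_nonneg measurableSet_Ioi fun _ _ => abs_nonneg _
  have hcont : ContinuousOn x (Icc 0 t) := fun s hs =>
    (hode s hs.1).continuousAt.continuousWithinAt
  obtain ⟨s₀, hs₀, hmax⟩ := isCompact_Icc.exists_isMaxOn (nonempty_Icc.2 ht)
    (continuous_abs.comp_continuousOn hcont)
  have hmemory : ∀ u ∈ Icc 0 s₀, |∫ s in (0 : ℝ)..u, k (u - s) * x s| ≤ |x s₀| * b :=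
    fun u hu => calc
      _ ≤ |x s₀| * ∫ ξ in (u - u)..(u - 0), |k ξ| :=
        abs_integral_comp_sub_mul_le hu.1
          (intervalIntegrable_of_integrableOn_Ici hk (by simp) (by simpa using hu.1))
          fun s hs => hmax ⟨hs.1, hs.2.trans (hu.2.trans hs₀.2)⟩
      _ ≤ |x s₀| * b := by
        rw [sub_self, sub_zero]
        gcongr
        exact intervalIntegral_le_setIntegral_Ioi hkabs (fun _ => abs_nonneg _) hu.1
  have hμ : 0 < -lam := by linarith
  have hs₀_bound : (|x s₀| - |x 0|) * -lam ≤ |x s₀| * b := by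
    rw [← le_div_iff₀ hμ, sub_le_iff_le_add']
    refine (abs_le_of_hasDerivAt_linear (by linarith) hs₀.1 (fun s hs => hode s hs.1)
      hmemory).trans ?_
    gcongr
    exact mul_le_of_le_one_left (abs_nonneg _) (exp_le_one_iff.2 (by nlinarith [hs₀.1]))
  rw [le_div_iff₀ (by linarith)]
  calc |x t| * (-lam - b) ≤ |x s₀| * (-lam - b) :=
        mul_le_mul_of_nonneg_right (hmax ⟨ht, le_rfl⟩) (by linarith)
    _ ≤ |x 0| * -lam := by linarith

theorem limsup_abs_le_of_eventually_abs_le {lam C B ε : ℝ} {k x : ℝ → ℝ} (hlam : lam < 0)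
    (hk : IntegrableOn k (Ici 0))
    (hode : ∀ t, 0 ≤ t → HasDerivAt x (lam * x t + ∫ s in (0 : ℝ)..t, k (t - s) * x s) t)
    (hC : ∀ t, 0 ≤ t → |x t| ≤ C) (hB : ∀ᶠ t in atTop, |x t| ≤ B) (hε : 0 < ε) :
    limsup (fun t => |x t|) atTop ≤ (C * ε + B * ∫ ξ in Ioi 0, |k ξ|) / -lam := by
  have hkabs : IntegrableOn (fun ξ => |k ξ|) (Ioi 0) := (hk.mono_set Ioi_subset_Ici_self).abs
  obtain ⟨T, hT⟩ := eventually_atTop.1 (hB.and (eventually_ge_atTop 0))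
  have hT0 : 0 ≤ T := (hT T le_rfl).2
  have hB0 : 0 ≤ B := (abs_nonneg _).trans (hT T le_rfl).1
  have hC0 : 0 ≤ C := (abs_nonneg _).trans (hC 0 le_rfl)
  refine limsup_abs_le_of_hasDerivAt_linear hlam ((eventually_ge_atTop 0).mono hode) ?_
  filter_upwards [(tendsto_intervalIntegral_sub_atTop hkabs T).eventually (ge_mem_nhds hε),
    eventually_ge_atTop T] with u hu hTu
  calc |∫ s in (0 : ℝ)..u, k (u - s) * x s|
      ≤ C * (∫ ξ in (u - T)..u, |k ξ|) + B * ∫ ξ in (0 : ℝ)..(u - T), |k ξ| :=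
        abs_integral_comp_sub_mul_le_add hT0 hTu hk
          (fun s hs => (hode s hs.1).continuousAt.continuousWithinAt)
          (fun s hs => hC s hs.1) fun s hs => (hT s hs.1).1
    _ ≤ C * ε + B * ∫ ξ in Ioi 0, |k ξ| := by
      gcongr
      exact intervalIntegral_le_setIntegral_Ioi hkabs (fun _ => abs_nonneg _) (by linarith)

theorem stmt_6_general (lam : ℝ) (k : ℝ → ℝ)
    (hk : MeasureTheory.IntegrableOn k (Set.Ici (0 : ℝ)))
    (hneg : lam + (∫ ξ in Set.Ioi (0 : ℝ), |k ξ|) < 0)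
    (x : ℝ → ℝ)
    (hode : ∀ t : ℝ, 0 ≤ t →
      HasDerivAt x (lam * x t + ∫ s in (0 : ℝ)..t, k (t - s) * x s) t) :
    Filter.Tendsto x Filter.atTop (nhds 0) := by
  set b := ∫ ξ in Ioi 0, |k ξ|
  have hb : 0 ≤ b := setIntegral_nonneg measurableSet_Ioi fun _ _ => abs_nonneg _
  have hlam : lam < 0 := by linarith
  set C := |x 0| * -lam / (-lam - b)
  have hC : ∀ t, 0 ≤ t → |x t| ≤ C := fun t ht => abs_le_of_hasDerivAt_memory hk hneg hode ht
  have hbdd : IsBoundedUnder (· ≤ ·) atTop fun t => |x t| :=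
    isBoundedUnder_of_eventually_le ((eventually_ge_atTop 0).mono hC)
  set L := limsup (fun t => |x t|) atTop
  have hstep : ∀ ε ∈ Ioi (0 : ℝ), L ≤ (C * ε + (L + ε) * b) / -lam := fun ε hε =>
    limsup_abs_le_of_eventually_abs_le hlam hk hode hC
      ((eventually_lt_of_limsup_lt (lt_add_of_pos_right L hε) hbdd).mono fun _ => le_of_lt) hε
  have hcontraction : L ≤ L * b / -lam := by
    refine ge_of_tendsto (x := 𝓝[>] 0) ?_ (eventually_nhdsWithin_of_forall hstep)
    have : Continuous fun ε => (C * ε + (L + ε) * b) / -lam := by fun_prop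
    simpa using (this.tendsto 0).mono_left nhdsWithin_le_nhds
  refine tendsto_zero_of_limsup_abs_nonpos hbdd ?_
  rw [le_div_iff₀ (by linarith)] at hcontraction
  nlinarith

/-- Sufficient condition for absolute stability of the exact solution
(Proposition 5.1): if λ + ∫₀^∞ |k| < 0 then the solution of the test problem with
memory tends to zero. -/
theorem stmt_6 (lam : ℝ) (k : ℝ → ℝ)
    (hk : MeasureTheory.IntegrableOn k (Set.Ici (0 : ℝ)))
    (hneg : lam + (∫ ξ in Set.Ioi (0 : ℝ), |k ξ|) < 0)
    (x : ℝ → ℝ) (x₀ : ℝ) (hx0 : x 0 = x₀)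
    (hcont : ContinuousOn x (Set.Ici (0 : ℝ)))
    (hode : ∀ t : ℝ, 0 ≤ t →
      HasDerivAt x (lam * x t + ∫ s in (0 : ℝ)..t, k (t - s) * x s) t) :
    Filter.Tendsto x Filter.atTop (nhds 0) :=
  stmt_6_general lam k hk hneg x hode
end

section
/- Let λ ∈ ℝ, let 0 < β ≤ 1 and h > 0, and let (k_n)_{n≥1} be a non-negative summable sequence with Σ_{n=1}^∞ k_n = κ. Assume λ < −κ. Let (y_n)_{n≥0} be a sequence of non-negative real numbers satisfying, for every n ≥ 1, (1 − βλh) y_n = (1 + (1−β)λh) y_{n−1} + βh Σ_{i=1}^{n−1} k_{n−i} y_i + (1−β)h Σ_{j=1}^{n−2} k_{n−j} y_j. Then lim_{n → ∞} y_n = 0. -/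
/-!
Summing the recurrence over `n = 1, …, N` and exchanging the order of the two convolution sums,
each of them is bounded by `κ` times a partial sum of `y`, since every `y i` meets only the
coefficients `k 1, k 2, …`. With `P N = y 0 + ⋯ + y (N - 1)` this gives
`(1 - βλh) P (N + 1) ≤ (1 - βλh) y 0 + (1 + (1 - β)λh + hκ) P N`, and `λ < -κ` makes the factor
in front of `P N` smaller than the one in front of `P (N + 1)`. Hence the partial sums of the
non-negative sequence `y` are bounded, `y` is summable, and so `y n → 0`.
-/

open Finset

lemma sum_sub_le_tsum {k : ℕ → ℝ} (hk : ∀ n, 0 ≤ k (n + 1)) (hsum : Summable fun n => k (n + 1))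
    {i : ℕ} {s : Finset ℕ} (hs : ∀ n ∈ s, i < n) :
    ∑ n ∈ s, k (n - i) ≤ ∑' n, k (n + 1) :=
  calc ∑ n ∈ s, k (n - i) = ∑ m ∈ s.image (· - (i + 1)), k (m + 1) := by
        rw [sum_image fun x hx z hz hxz => by
          have := hs x hx; have := hs z hz; omega]
        exact sum_congr rfl fun n hn => by have := hs n hn; congr 1; omega
    _ ≤ ∑' n, k (n + 1) := hsum.sum_le_tsum _ fun m _ => hk m

lemma sum_Icc_sum_Icc_sub_le {k y : ℕ → ℝ} (hk : ∀ n, 0 ≤ k (n + 1))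
    (hsum : Summable fun n => k (n + 1)) (hy : ∀ n, 0 ≤ y n) {p : ℕ} (hp : 1 ≤ p) (N : ℕ) :
    ∑ n ∈ Icc 1 N, ∑ i ∈ Icc 1 (n - p), k (n - i) * y i
      ≤ (∑' n, k (n + 1)) * ∑ i ∈ range N, y i := by
  rw [sum_comm' (s' := fun i => Icc (i + p) N) (t' := Icc 1 (N - 1))
    (fun n i => by simp only [mem_Icc]; omega), mul_sum]
  calc ∑ i ∈ Icc 1 (N - 1), ∑ n ∈ Icc (i + p) N, k (n - i) * y i
      ≤ ∑ i ∈ Icc 1 (N - 1), (∑' n, k (n + 1)) * y i := by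
        refine sum_le_sum fun i _ => ?_
        rw [← sum_mul]
        exact mul_le_mul_of_nonneg_right
          (sum_sub_le_tsum hk hsum fun n hn => by have := (mem_Icc.1 hn).1; omega) (hy i)
    _ ≤ ∑ i ∈ range N, (∑' n, k (n + 1)) * y i :=
        sum_le_sum_of_subset_of_nonneg (fun i hi => by simp only [mem_Icc, mem_range] at *; omega)
          fun i _ _ => mul_nonneg (tsum_nonneg hk) (hy i)

lemma sum_range_succ_eq_add_sum_Icc (y : ℕ → ℝ) (N : ℕ) :
    ∑ i ∈ range (N + 1), y i = y 0 + ∑ i ∈ Icc 1 N, y i := by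
  rw [sum_range_eq_add_Ico _ N.succ_pos, ← Ico_add_one_right_eq_Icc]; rfl

lemma sum_Icc_sub_one_eq_sum_range (y : ℕ → ℝ) (N : ℕ) :
    ∑ n ∈ Icc 1 N, y (n - 1) = ∑ i ∈ range N, y i := by
  rw [← Ico_add_one_right_eq_Icc, sum_Ico_eq_sum_range]
  simp

lemma mul_le_max_zero_mul {r x z : ℝ} (hx : 0 ≤ x) (hxz : x ≤ z) : r * x ≤ max r 0 * z :=
  (mul_le_mul_of_nonneg_right (le_max_left r 0) hx).trans
    (mul_le_mul_of_nonneg_left hxz (le_max_right r 0))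

lemma summable_of_mul_sum_range_succ_le {y : ℕ → ℝ} (hy : ∀ n, 0 ≤ y n) {a b r : ℝ}
    (ha : 0 < a) (hr : r < a)
    (h : ∀ N, a * ∑ i ∈ range (N + 1), y i ≤ b + r * ∑ i ∈ range N, y i) : Summable y := by
  have hd : 0 < a - max r 0 := sub_pos.2 (max_lt hr ha)
  have hb : 0 ≤ b := by simpa using (mul_nonneg ha.le (hy 0)).trans (by simpa using h 0)
  refine summable_of_sum_range_le hy (c := b / (a - max r 0)) fun n => ?_
  rw [le_div_iff₀ hd]
  rcases n with _ | N
  · simpa using hb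
  · have := mul_le_max_zero_mul (r := r) (sum_nonneg fun i _ => hy i)
      (sum_le_sum_of_subset_of_nonneg (range_subset_range.2 N.le_succ) fun i _ _ => hy i)
    linarith [h N]

lemma mul_sum_range_succ_le_of_recurrence {k y : ℕ → ℝ} (hk : ∀ n, 0 ≤ k (n + 1))
    (hsum : Summable fun n => k (n + 1)) (hy : ∀ n, 0 ≤ y n) {a c α γ : ℝ}
    (hα : 0 ≤ α) (hγ : 0 ≤ γ)
    (hrec : ∀ n : ℕ, 1 ≤ n →
      a * y n = c * y (n - 1) + α * ∑ i ∈ Icc 1 (n - 1), k (n - i) * y i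
        + γ * ∑ j ∈ Icc 1 (n - 2), k (n - j) * y j) (N : ℕ) :
    a * ∑ i ∈ range (N + 1), y i
      ≤ a * y 0 + (c + (α + γ) * ∑' n, k (n + 1)) * ∑ i ∈ range N, y i := by
  have hsummed : a * ∑ n ∈ Icc 1 N, y n = c * ∑ n ∈ Icc 1 N, y (n - 1)
      + α * ∑ n ∈ Icc 1 N, ∑ i ∈ Icc 1 (n - 1), k (n - i) * y i
      + γ * ∑ n ∈ Icc 1 N, ∑ j ∈ Icc 1 (n - 2), k (n - j) * y j := by
    simp only [mul_sum, ← sum_add_distrib]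
    exact sum_congr rfl fun n hn => by rw [hrec n (mem_Icc.1 hn).1, mul_sum, mul_sum]
  rw [sum_range_succ_eq_add_sum_Icc, mul_add, hsummed, sum_Icc_sub_one_eq_sum_range]
  have h₁ := mul_le_mul_of_nonneg_left (sum_Icc_sum_Icc_sub_le hk hsum hy le_rfl N) hα
  have h₂ := mul_le_mul_of_nonneg_left (sum_Icc_sum_Icc_sub_le hk hsum hy one_le_two N) hγ
  linarith

/-- Induction lemma for weak A-stability (Lemma 5.1). The sequence `k` represents
`(k_n)_{n ≥ 1}` (the value `k 0` is irrelevant). -/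
theorem stmt_7 (lam : ℝ) (β h : ℝ) (hβ0 : 0 < β) (hβ1 : β ≤ 1) (hh : 0 < h)
    (k : ℕ → ℝ) (κ : ℝ)
    (hknn : ∀ n : ℕ, 1 ≤ n → 0 ≤ k n)
    (hksum : Summable (fun n : ℕ => k (n + 1)))
    (hκ : ∑' n : ℕ, k (n + 1) = κ)
    (hlam : lam < -κ)
    (y : ℕ → ℝ) (hy : ∀ n, 0 ≤ y n)
    (hrec : ∀ n : ℕ, 1 ≤ n →
      (1 - β * lam * h) * y n
        = (1 + (1 - β) * lam * h) * y (n - 1)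
          + β * h * ∑ i ∈ Finset.Icc 1 (n - 1), k (n - i) * y i
          + (1 - β) * h * ∑ j ∈ Finset.Icc 1 (n - 2), k (n - j) * y j) :
    Filter.Tendsto y Filter.atTop (nhds 0) := by
  have hk : ∀ n, 0 ≤ k (n + 1) := fun n => hknn (n + 1) n.succ_pos
  have hlam0 : lam < 0 := hlam.trans_le (by simpa [← hκ] using tsum_nonneg hk)
  have hbound := mul_sum_range_succ_le_of_recurrence hk hksum hy (mul_nonneg hβ0.le hh.le)
    (mul_nonneg (sub_nonneg.2 hβ1) hh.le) hrec
  rw [hκ] at hbound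
  refine (summable_of_mul_sum_range_succ_le hy ?_ ?_ hbound).tendsto_atTop_zero
  · nlinarith [mul_pos hβ0 hh]
  · nlinarith
end

section
/- Let λ ∈ ℝ, 0 < β ≤ 1, h > 0, and let (k_n)_{n≥1} be a non-negative summable sequence with Σ_{n=1}^∞ k_n = κ and λ < −κ. Let (y_n)_{n≥0} be a sequence of non-negative real numbers with y_0 = 1 satisfying, for every n ≥ 1, (1 − βλh) y_n = (1 + (1−β)λh) y_{n−1} + βh Σ_{i=1}^{n−1} k_{n−i} y_i + (1−β)h Σ_{j=1}^{n−2} k_{n−j} y_j. Set α := (1/2) · ( (1 + (1−β)λh + κh)/(1 − βλh) + 1 ). Then y_n ≤ α for every n ≥ 1. -/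
/-!
Write `D = 1 - βλh > 0` and `c = 1 + (1-β)λh`, so that `D y₁ = c`, hence `c ≥ 0` because
`y₁ ≥ 0`. Since the partial sums of `k` are at most `κ`, an induction shows that any
`a ≥ max y₁ 0` with `(c + κh) a ≤ D a` bounds every `y_n`, `n ≥ 1`. Since `λ < -κ` gives
`c + κh < D`, the midpoint `α` of `(c + κh)/D ≥ y₁` and `1` is such an `a`.
-/

open Finset

section
variable {k y : ℕ → ℝ} {κ : ℝ}

theorem sum_Icc_one_le_tsum (hk : ∀ n, 1 ≤ n → 0 ≤ k n) (hsum : Summable fun n => k (n + 1))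
    (m : ℕ) : ∑ i ∈ Icc 1 m, k i ≤ ∑' n, k (n + 1) := by
  rw [← Ico_add_one_right_eq_Icc, sum_Ico_eq_sum_range, add_tsub_cancel_right]
  simp only [add_comm 1]
  exact hsum.sum_le_tsum _ fun j _ => hk (j + 1) (Nat.le_add_left _ _)

theorem sum_Icc_one_sub_le (hk : ∀ n, 1 ≤ n → 0 ≤ k n) (hpartial : ∀ m, ∑ i ∈ Icc 1 m, k i ≤ κ)
    {m n : ℕ} (hmn : m < n) : ∑ i ∈ Icc 1 m, k (n - i) ≤ κ := by
  have hreflect : ∑ i ∈ Icc 1 (n - 1), k (n - i) = ∑ i ∈ Icc 1 (n - 1), k i :=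
    sum_nbij' (n - ·) (n - ·) (fun a ha => by simp only [mem_Icc] at ha ⊢; omega)
      (fun a ha => by simp only [mem_Icc] at ha ⊢; omega)
      (fun a ha => by simp only [mem_Icc] at ha; omega)
      (fun a ha => by simp only [mem_Icc] at ha; omega) fun _ _ => rfl
  calc ∑ i ∈ Icc 1 m, k (n - i) ≤ ∑ i ∈ Icc 1 (n - 1), k (n - i) :=
        sum_le_sum_of_subset_of_nonneg (Icc_subset_Icc_right (by omega)) fun i hi _ =>
          hk _ (by simp only [mem_Icc] at hi; omega)
    _ = ∑ i ∈ Icc 1 (n - 1), k i := hreflect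
    _ ≤ κ := hpartial _

theorem sum_Icc_one_sub_mul_le (hk : ∀ n, 1 ≤ n → 0 ≤ k n)
    (hpartial : ∀ m, ∑ i ∈ Icc 1 m, k i ≤ κ) {a : ℝ} (ha : 0 ≤ a) {m n : ℕ} (hmn : m < n)
    (hy : ∀ i ∈ Icc 1 m, y i ≤ a) : ∑ i ∈ Icc 1 m, k (n - i) * y i ≤ κ * a :=
  calc ∑ i ∈ Icc 1 m, k (n - i) * y i ≤ ∑ i ∈ Icc 1 m, k (n - i) * a :=
        sum_le_sum fun i hi => mul_le_mul_of_nonneg_left (hy i hi)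
          (hk _ (by simp only [mem_Icc] at hi; omega))
    _ = (∑ i ∈ Icc 1 m, k (n - i)) * a := (sum_mul ..).symm
    _ ≤ κ * a := mul_le_mul_of_nonneg_right (sum_Icc_one_sub_le hk hpartial hmn) ha

theorem le_of_volterra_rec (hk : ∀ n, 1 ≤ n → 0 ≤ k n) (hpartial : ∀ m, ∑ i ∈ Icc 1 m, k i ≤ κ)
    {D c p q a : ℝ} (hD : 0 < D) (hc : 0 ≤ c) (hp : 0 ≤ p) (hq : 0 ≤ q) (ha : 0 ≤ a)
    (hca : (c + (p + q) * κ) * a ≤ D * a) (hy1 : y 1 ≤ a)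
    (hrec : ∀ n, 2 ≤ n → D * y n = c * y (n - 1) + p * ∑ i ∈ Icc 1 (n - 1), k (n - i) * y i
      + q * ∑ j ∈ Icc 1 (n - 2), k (n - j) * y j) :
    ∀ n, 1 ≤ n → y n ≤ a := by
  intro n
  induction n using Nat.strong_induction_on with
  | _ n ih =>
    intro hn
    obtain rfl | hn2 : n = 1 ∨ 2 ≤ n := by omega
    · exact hy1
    have hprev : ∀ m < n, ∀ i ∈ Icc 1 m, y i ≤ a := fun m hm i hi => by
      simp only [mem_Icc] at hi
      exact ih i (by omega) hi.1
    have hlast := mul_le_mul_of_nonneg_left (ih (n - 1) (by omega) (by omega)) hc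
    have hS₁ := mul_le_mul_of_nonneg_left
      (sum_Icc_one_sub_mul_le (n := n) hk hpartial ha (by omega) (hprev (n - 1) (by omega))) hp
    have hS₂ := mul_le_mul_of_nonneg_left
      (sum_Icc_one_sub_mul_le (n := n) hk hpartial ha (by omega) (hprev (n - 2) (by omega))) hq
    refine le_of_mul_le_mul_left ?_ hD
    calc D * y n ≤ (c + (p + q) * κ) * a := by rw [hrec n hn2]; linarith
      _ ≤ D * a := hca

end

/-- The sequence `k` represents `(k_n)_{n ≥ 1}` (the value `k 0` is irrelevant). -/
theorem stmt_9 (lam : ℝ) (β h : ℝ) (hβ0 : 0 < β) (hβ1 : β ≤ 1) (hh : 0 < h)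
    (k : ℕ → ℝ) (κ : ℝ)
    (hknn : ∀ n : ℕ, 1 ≤ n → 0 ≤ k n)
    (hksum : Summable (fun n : ℕ => k (n + 1)))
    (hκ : ∑' n : ℕ, k (n + 1) = κ)
    (hlam : lam < -κ)
    (y : ℕ → ℝ) (hy : ∀ n, 0 ≤ y n) (hy0 : y 0 = 1)
    (hrec : ∀ n : ℕ, 1 ≤ n →
      (1 - β * lam * h) * y n
        = (1 + (1 - β) * lam * h) * y (n - 1)
          + β * h * ∑ i ∈ Finset.Icc 1 (n - 1), k (n - i) * y i
          + (1 - β) * h * ∑ j ∈ Finset.Icc 1 (n - 2), k (n - j) * y j) :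
    ∀ n : ℕ, 1 ≤ n →
      y n ≤ (1 / 2) * ((1 + (1 - β) * lam * h + κ * h) / (1 - β * lam * h) + 1) := by
  set D := 1 - β * lam * h
  set c := 1 + (1 - β) * lam * h
  have hpartial : ∀ m, ∑ i ∈ Icc 1 m, k i ≤ κ := hκ ▸ sum_Icc_one_le_tsum hknn hksum
  have hκ0 : 0 ≤ κ := by simpa using hpartial 0
  have hD : 0 < D := by nlinarith [mul_pos hβ0 hh]
  have hy1 : D * y 1 = c := by simpa [hy0] using hrec 1 le_rfl
  have hc : 0 ≤ c := hy1 ▸ mul_nonneg hD.le (hy 1)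
  have hND : c + κ * h < D := by nlinarith
  have hNDdiv : (c + κ * h) / D < 1 := (div_lt_one hD).2 hND
  have hα : 0 ≤ (1 / 2) * ((c + κ * h) / D + 1) := by
    have := div_nonneg (add_nonneg hc (mul_nonneg hκ0 hh.le)) hD.le
    positivity
  refine le_of_volterra_rec hknn hpartial hD hc (mul_nonneg hβ0.le hh.le)
    (mul_nonneg (by linarith) hh.le) hα ?_ ?_ fun n hn => hrec n (by omega)
  · rw [show c + (β * h + (1 - β) * h) * κ = c + κ * h by ring]
    exact mul_le_mul_of_nonneg_right hND.le hα
  · have : y 1 ≤ (c + κ * h) / D := by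
      rw [le_div_iff₀ hD, mul_comm, hy1]
      nlinarith
    linarith
end
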